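/- If the switched system x(k+1) = A_{σ(k)} x(k) + B_{σ(k)} u(k) is current-mode-independent memory-feedback stabilizable (IFS_m), then there exists a static feedback Φ : ℝⁿ → ℝ^m that is homogeneous of degree one (Φ(λx) = λΦ(x) for all λ ∈ ℝ, x ∈ ℝⁿ) and constants M > 0, γ̃ ∈ [0,1) such that every solution of the closed loop x(k+1) = A_{σ(k)} x(k) + B_{σ(k)} Φ(x(k)) satisfies ‖x(k)‖ ≤ M γ̃^k ‖x(0)‖ for every initial state, every switching signal σ : ℕ → Σ and every k ∈ ℕ. -/

import Mathlib

/-!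
The value function `W x`, the infimum of the constants `c` for which some memory controller keeps
the trajectory from `x` below `c γ ^ k` for every switching signal, satisfies
`‖x‖ ≤ W x ≤ M ‖x‖` and `W (λ x) = |λ| W x`. Since the controller does not see the current mode,
the first control value `u` of a near-optimal controller from `x` serves all modes at once:
`W (A i x + B i u) ≤ γ' W x` for every `i`, whenever `γ < γ' < 1`. Choosing such a `u` at one
representative of each line through the origin and extending homogeneously gives a static
feedback along which `W` decays by the factor `γ'` at every step.
-/

open Matrix Filter ENNReal

noncomputable section

/-- State history `[x(k), …, x(0)]` of the closed loop driven by the reversed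
mode list `[i_{k-1}, …, i_0]`, under a current-mode-independent memory controller `Ψ`. -/
def memHist {n m : ℕ} {S : Type*} (A : S → Matrix (Fin n) (Fin n) ℝ)
    (B : S → Matrix (Fin n) (Fin m) ℝ)
    (Ψ : List (EuclideanSpace ℝ (Fin n)) → List S → EuclideanSpace ℝ (Fin m))
    (x0 : EuclideanSpace ℝ (Fin n)) : List S → List (EuclideanSpace ℝ (Fin n))
  | [] => [x0]
  | i :: is =>
      WithLp.toLp 2 ((A i).mulVec ((memHist A B Ψ x0 is).headD 0) +
        (B i).mulVec (Ψ (memHist A B Ψ x0 is) is)) :: memHist A B Ψ x0 is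

/-- Closed-loop solution `φ(k, σ, x0, Ψ)` under the switching signal `σ`:
at each step, `Ψ` receives the current and past states `(x(k), …, x(0))`
and the past modes `(σ(k-1), …, σ(0))`. -/
def memTraj {n m : ℕ} {S : Type*} (A : S → Matrix (Fin n) (Fin n) ℝ)
    (B : S → Matrix (Fin n) (Fin m) ℝ)
    (Ψ : List (EuclideanSpace ℝ (Fin n)) → List S → EuclideanSpace ℝ (Fin m))
    (x0 : EuclideanSpace ℝ (Fin n)) (σ : ℕ → S) (k : ℕ) : EuclideanSpace ℝ (Fin n) :=
  (memHist A B Ψ x0 (((List.range k).reverse).map σ)).headD 0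

open scoped Pointwise

section ClosedLoop

variable {n m : ℕ} {S : Type*} (A : S → Matrix (Fin n) (Fin n) ℝ)
  (B : S → Matrix (Fin n) (Fin m) ℝ)

def nextState (i : S) (x : EuclideanSpace ℝ (Fin n)) (u : EuclideanSpace ℝ (Fin m)) :
    EuclideanSpace ℝ (Fin n) :=
  WithLp.toLp 2 ((A i).mulVec x + (B i).mulVec u)

lemma nextState_smul (i : S) (c : ℝ) (x : EuclideanSpace ℝ (Fin n))
    (u : EuclideanSpace ℝ (Fin m)) :
    nextState A B i (c • x) (c • u) = c • nextState A B i x u := by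
  simp only [nextState, WithLp.ofLp_smul, Matrix.mulVec_smul, ← smul_add, WithLp.toLp_smul]

variable {A B} (Ψ : List (EuclideanSpace ℝ (Fin n)) → List S → EuclideanSpace ℝ (Fin m))
  (x0 : EuclideanSpace ℝ (Fin n))

lemma memHist_ne_nil (l : List S) : memHist A B Ψ x0 l ≠ [] := by
  cases l <;> simp [memHist]

lemma memTraj_zero (σ : ℕ → S) : memTraj A B Ψ x0 σ 0 = x0 := rfl

lemma memHist_map_smul {Ψ' : List (EuclideanSpace ℝ (Fin n)) → List S → EuclideanSpace ℝ (Fin m)}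
    {c : ℝ} (hΨ' : ∀ hst mo, Ψ' (hst.map (c • ·)) mo = c • Ψ hst mo) (l : List S) :
    memHist A B Ψ' (c • x0) l = (memHist A B Ψ x0 l).map (c • ·) := by
  induction l with
  | nil => rfl
  | cons i is ih =>
    change nextState A B i _ _ :: _ = (nextState A B i _ _ :: _).map _
    rw [ih, hΨ', ← smul_zero c, List.headD_map, smul_zero, List.map_cons, nextState_smul]

lemma memTraj_map_smul {Ψ' : List (EuclideanSpace ℝ (Fin n)) → List S → EuclideanSpace ℝ (Fin m)}
    {c : ℝ} (hΨ' : ∀ hst mo, Ψ' (hst.map (c • ·)) mo = c • Ψ hst mo) (σ : ℕ → S) (k : ℕ) :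
    memTraj A B Ψ' (c • x0) σ k = c • memTraj A B Ψ x0 σ k := by
  rw [memTraj, memHist_map_smul Ψ x0 hΨ', ← smul_zero c, List.headD_map]
  rfl

lemma memHist_append_singleton (i : S) (l : List S) :
    memHist A B Ψ x0 (l ++ [i]) =
      memHist A B (fun hst mo => Ψ (hst ++ [x0]) (mo ++ [i]))
        (nextState A B i x0 (Ψ [x0] [])) l ++ [x0] := by
  induction l with
  | nil => rfl
  | cons j js ih =>
    obtain ⟨y, ys, hy⟩ := List.exists_cons_of_ne_nil (memHist_ne_nil (A := A) (B := B)
      (fun hst mo => Ψ (hst ++ [x0]) (mo ++ [i])) (nextState A B i x0 (Ψ [x0] [])) js)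
    rw [List.cons_append, memHist, memHist, ih, hy]
    rfl

lemma memTraj_succ (σ : ℕ → S) (k : ℕ) :
    memTraj A B Ψ x0 σ (k + 1) =
      memTraj A B (fun hst mo => Ψ (hst ++ [x0]) (mo ++ [σ 0]))
        (nextState A B (σ 0) x0 (Ψ [x0] [])) (fun t => σ (t + 1)) k := by
  have hmodes : (List.range (k + 1)).reverse.map σ =
      (List.range k).reverse.map (fun t => σ (t + 1)) ++ [σ 0] := by
    rw [List.range_succ_eq_map, List.reverse_cons, List.map_append, ← List.map_reverse,
      List.map_map]
    rfl
  obtain ⟨y, ys, hy⟩ := List.exists_cons_of_ne_nil (memHist_ne_nil (A := A) (B := B)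
    (fun hst mo => Ψ (hst ++ [x0]) (mo ++ [σ 0])) (nextState A B (σ 0) x0 (Ψ [x0] []))
    ((List.range k).reverse.map (fun t => σ (t + 1))))
  unfold memTraj
  rw [hmodes, memHist_append_singleton, hy]
  rfl

end ClosedLoop

section DecayValue

variable {n m : ℕ} {S : Type*} (A : S → Matrix (Fin n) (Fin n) ℝ)
  (B : S → Matrix (Fin n) (Fin m) ℝ) (γ : ℝ)

def decayBounds (x : EuclideanSpace ℝ (Fin n)) : Set ℝ :=
  {c | ∃ Ψ : List (EuclideanSpace ℝ (Fin n)) → List S → EuclideanSpace ℝ (Fin m),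
    ∀ (σ : ℕ → S) (k : ℕ), ‖memTraj A B Ψ x σ k‖ ≤ c * γ ^ k}

def decayValue (x : EuclideanSpace ℝ (Fin n)) : ℝ :=
  sInf (decayBounds A B γ x)

variable {A B γ}

lemma norm_le_of_mem_decayBounds [Nonempty S] {x : EuclideanSpace ℝ (Fin n)} {c : ℝ}
    (hc : c ∈ decayBounds A B γ x) : ‖x‖ ≤ c := by
  obtain ⟨Ψ, hΨ⟩ := hc
  simpa [memTraj_zero] using hΨ (fun _ => Classical.arbitrary S) 0

lemma bddBelow_decayBounds [Nonempty S] (x : EuclideanSpace ℝ (Fin n)) :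
    BddBelow (decayBounds A B γ x) :=
  ⟨‖x‖, fun _ => norm_le_of_mem_decayBounds⟩

lemma decayValue_le [Nonempty S] {x : EuclideanSpace ℝ (Fin n)} {c : ℝ}
    (hc : c ∈ decayBounds A B γ x) : decayValue A B γ x ≤ c :=
  csInf_le (bddBelow_decayBounds x) hc

lemma norm_le_decayValue [Nonempty S] {x : EuclideanSpace ℝ (Fin n)}
    (hx : (decayBounds A B γ x).Nonempty) : ‖x‖ ≤ decayValue A B γ x :=
  le_csInf hx fun _ => norm_le_of_mem_decayBounds

lemma abs_mul_mem_decayBounds {x : EuclideanSpace ℝ (Fin n)} {c : ℝ}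
    (hc : c ∈ decayBounds A B γ x) (lam : ℝ) : |lam| * c ∈ decayBounds A B γ (lam • x) := by
  obtain ⟨Ψ, hΨ⟩ := hc
  let Ψ' : List (EuclideanSpace ℝ (Fin n)) → List S → EuclideanSpace ℝ (Fin m) :=
    fun hst mo => lam • Ψ (hst.map (lam⁻¹ • ·)) mo
  have hscaled : ∀ hst mo, Ψ' (hst.map (lam • ·)) mo = lam • Ψ hst mo := by
    intro hst mo
    rcases eq_or_ne lam 0 with rfl | hlam
    · simp [Ψ']
    · simp [Ψ', List.map_map, Function.comp_def, smul_smul, inv_mul_cancel₀ hlam]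
  refine ⟨Ψ', fun σ k => ?_⟩
  rw [memTraj_map_smul Ψ x hscaled, norm_smul, Real.norm_eq_abs, mul_assoc]
  exact mul_le_mul_of_nonneg_left (hΨ σ k) (abs_nonneg lam)

lemma decayValue_smul_le [Nonempty S] {x : EuclideanSpace ℝ (Fin n)}
    (hx : (decayBounds A B γ x).Nonempty) (lam : ℝ) :
    decayValue A B γ (lam • x) ≤ |lam| * decayValue A B γ x := by
  rw [decayValue, decayValue, ← smul_eq_mul, ← Real.sInf_smul_of_nonneg (abs_nonneg lam)]
  refine csInf_le_csInf (bddBelow_decayBounds _) hx.smul_set ?_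
  rintro _ ⟨c, hc, rfl⟩
  exact abs_mul_mem_decayBounds hc lam

lemma decayValue_smul [Nonempty S] (hne : ∀ x, (decayBounds A B γ x).Nonempty)
    (lam : ℝ) (x : EuclideanSpace ℝ (Fin n)) :
    decayValue A B γ (lam • x) = |lam| * decayValue A B γ x := by
  rcases eq_or_ne lam 0 with rfl | hlam
  · refine le_antisymm ?_ (by simpa using norm_le_decayValue (hne ((0 : ℝ) • x)))
    simpa using decayValue_smul_le (hne x) 0
  refine le_antisymm (decayValue_smul_le (hne x) lam) ?_
  have := decayValue_smul_le (hne (lam • x)) lam⁻¹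
  rw [inv_smul_smul₀ hlam, abs_inv] at this
  exact (le_inv_mul_iff₀ (abs_pos.2 hlam)).1 this

lemma exists_mul_mem_decayBounds_nextState {x : EuclideanSpace ℝ (Fin n)} {c : ℝ}
    (hc : c ∈ decayBounds A B γ x) :
    ∃ u, ∀ i, γ * c ∈ decayBounds A B γ (nextState A B i x u) := by
  obtain ⟨Ψ, hΨ⟩ := hc
  refine ⟨Ψ [x] [], fun i => ⟨fun hst mo => Ψ (hst ++ [x]) (mo ++ [i]), fun σ k => ?_⟩⟩
  calc _ = ‖memTraj A B Ψ x (Stream'.cons i σ) (k + 1)‖ :=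
        congrArg norm (memTraj_succ Ψ x (Stream'.cons i σ) k).symm
    _ ≤ c * γ ^ (k + 1) := hΨ _ _
    _ = γ * c * γ ^ k := by ring

lemma exists_decayValue_nextState_le [Nonempty S] (hγ : 0 ≤ γ) {γ' : ℝ} (hγγ' : γ < γ')
    (hne : ∀ x, (decayBounds A B γ x).Nonempty) (x : EuclideanSpace ℝ (Fin n)) :
    ∃ u, ∀ i, decayValue A B γ (nextState A B i x u) ≤ γ' * decayValue A B γ x := by
  rcases eq_or_ne x 0 with rfl | hx
  · have hzero : decayValue A B γ 0 = 0 := by simpa using decayValue_smul hne 0 0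
    exact ⟨0, fun i => by simp [nextState, hzero]⟩
  have hpos : 0 < decayValue A B γ x := (norm_pos_iff.2 hx).trans_le (norm_le_decayValue (hne x))
  have hlt : sInf (γ • decayBounds A B γ x) < γ' * decayValue A B γ x := by
    rw [Real.sInf_smul_of_nonneg hγ, smul_eq_mul, ← decayValue]
    exact mul_lt_mul_of_pos_right hγγ' hpos
  obtain ⟨_, ⟨c, hc, rfl⟩, hc_lt⟩ := exists_lt_of_csInf_lt (hne x).smul_set hlt
  obtain ⟨u, hu⟩ := exists_mul_mem_decayBounds_nextState hc
  exact ⟨u, fun i => (decayValue_le (hu i)).trans hc_lt.le⟩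

end DecayValue

section HomogeneousExtension

variable {K V F : Type*} [DivisionRing K] [AddCommGroup V] [Module K V] [AddCommGroup F]
  [Module K F]

theorem exists_smul_invariant_rep :
    ∃ rep : V → V, (∀ x, x ≠ 0 → rep x ≠ 0) ∧ (∀ (c : K) x, c ≠ 0 → rep (c • x) = rep x) ∧
      ∀ x, ∃ a : K, x = a • rep x := by
  classical
  refine ⟨fun x => if hx : x = 0 then 0 else (Projectivization.mk K x hx).rep, ?_, ?_, ?_⟩
  · intro x hx
    simpa [hx] using Projectivization.rep_nonzero _
  · intro c x hc
    rcases eq_or_ne x 0 with rfl | hx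
    · simp
    have hcx : c • x ≠ 0 := smul_ne_zero hc hx
    simp only [dif_neg hx, dif_neg hcx]
    rw [(Projectivization.mk_eq_mk_iff' K _ _ hcx hx).2 ⟨c, rfl⟩]
  · intro x
    rcases eq_or_ne x 0 with rfl | hx
    · exact ⟨0, by simp⟩
    obtain ⟨a, ha⟩ := Projectivization.exists_smul_eq_mk_rep K x hx
    exact ⟨((a⁻¹ : Kˣ) : K), by simp only [dif_neg hx, ← ha, ← Units.smul_def, inv_smul_smul]⟩

theorem exists_homogeneous_extension (u : V → F) :
    ∃ Φ : V → F, (∀ (c : K) x, Φ (c • x) = c • Φ x) ∧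
      ∀ x, ∃ (c : K) (r : V), x = c • r ∧ Φ x = c • u r := by
  classical
  obtain ⟨rep, rep_ne_zero, rep_smul, exists_coeff⟩ := exists_smul_invariant_rep (K := K) (V := V)
  have : ∀ x, ∃ a : K, x = a • rep x ∧ (x = 0 → a = 0) := by
    intro x
    rcases eq_or_ne x 0 with rfl | hx
    · exact ⟨0, by simp⟩
    · obtain ⟨a, ha⟩ := exists_coeff x
      exact ⟨a, ha, fun h => absurd h hx⟩
  choose coeff hcoeff hcoeff_zero using this
  have coeff_smul : ∀ (c : K) x, coeff (c • x) = c * coeff x := by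
    intro c x
    rcases eq_or_ne c 0 with rfl | hc
    · simp [hcoeff_zero]
    rcases eq_or_ne x 0 with rfl | hx
    · simp [hcoeff_zero]
    refine smul_left_injective K (rep_ne_zero x hx) ?_
    change coeff (c • x) • rep x = (c * coeff x) • rep x
    rw [mul_smul, ← hcoeff x, ← rep_smul c x hc, ← hcoeff (c • x)]
  refine ⟨fun x => coeff x • u (rep x), fun c x => ?_, fun x => ⟨coeff x, rep x, hcoeff x, rfl⟩⟩
  rcases eq_or_ne c 0 with rfl | hc
  · simp [hcoeff_zero]
  · simp only [coeff_smul, rep_smul c x hc, mul_smul]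

end HomogeneousExtension

lemma le_mul_of_homogeneous_extension {V F : Type*} [AddCommGroup V] [Module ℝ V]
    [AddCommGroup F] [Module ℝ F] {W : V → ℝ} (hW : ∀ (c : ℝ) x, W (c • x) = |c| * W x)
    {f : V → F → V} (hf : ∀ (c : ℝ) x u, f (c • x) (c • u) = c • f x u) {u Φ : V → F}
    (hΦ : ∀ x, ∃ (c : ℝ) (r : V), x = c • r ∧ Φ x = c • u r) {ρ : ℝ}
    (hu : ∀ r, W (f r (u r)) ≤ ρ * W r) (x : V) : W (f x (Φ x)) ≤ ρ * W x := by
  obtain ⟨c, r, rfl, hΦr⟩ := hΦ x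
  rw [hΦr, hf, hW, hW]
  calc |c| * W (f r (u r)) ≤ |c| * (ρ * W r) := mul_le_mul_of_nonneg_left (hu r) (abs_nonneg c)
    _ = ρ * (|c| * W r) := by ring

theorem ifs_mem_implies_homogeneous_static_general {n m : ℕ} {S : Type*} [Nonempty S]
    (A : S → Matrix (Fin n) (Fin n) ℝ) (B : S → Matrix (Fin n) (Fin m) ℝ)
    (h : ∃ M > (0 : ℝ), ∃ γ ∈ Set.Ico (0 : ℝ) 1,
      ∃ Ψ : List (EuclideanSpace ℝ (Fin n)) → List S → EuclideanSpace ℝ (Fin m),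
        ∀ (x0 : EuclideanSpace ℝ (Fin n)) (σ : ℕ → S) (k : ℕ),
          ‖memTraj A B Ψ x0 σ k‖ ≤ M * γ ^ k * ‖x0‖) :
    ∃ Φ : EuclideanSpace ℝ (Fin n) → EuclideanSpace ℝ (Fin m),
      (∀ (lam : ℝ) (x : EuclideanSpace ℝ (Fin n)), Φ (lam • x) = lam • Φ x) ∧
      ∃ M > (0 : ℝ), ∃ γ' ∈ Set.Ico (0 : ℝ) 1,
        ∀ (x : ℕ → EuclideanSpace ℝ (Fin n)) (σ : ℕ → S),
          (∀ k, x (k + 1) = (A (σ k)).mulVec (x k) + (B (σ k)).mulVec (Φ (x k))) →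
          ∀ k, ‖x k‖ ≤ M * γ' ^ k * ‖x 0‖ := by
  obtain ⟨M, hM, γ, ⟨hγ0, hγ1⟩, Ψ, hΨ⟩ := h
  set W := decayValue A B γ
  have hbound : ∀ x, M * ‖x‖ ∈ decayBounds A B γ x :=
    fun x => ⟨Ψ, fun σ k => (hΨ x σ k).trans_eq (by ring)⟩
  have hne : ∀ x, (decayBounds A B γ x).Nonempty := fun x => ⟨_, hbound x⟩
  obtain ⟨γ', hγγ', hγ'1⟩ := exists_between hγ1
  have hγ'0 : 0 ≤ γ' := hγ0.trans hγγ'.le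
  choose u hu using exists_decayValue_nextState_le hγ0 hγγ' hne
  obtain ⟨Φ, hΦ, hΦu⟩ := exists_homogeneous_extension (K := ℝ) u
  refine ⟨Φ, hΦ, M, hM, γ', ⟨hγ'0, hγ'1⟩, fun x σ hx k => ?_⟩
  have hstep : ∀ k, W (x (k + 1)) ≤ γ' * W (x k) := fun k => by
    rw [show x (k + 1) = nextState A B (σ k) (x k) (Φ (x k)) from congrArg (WithLp.toLp 2) (hx k)]
    exact le_mul_of_homogeneous_extension (decayValue_smul hne) (nextState_smul A B (σ k)) hΦu
      (fun r => hu r (σ k)) (x k)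
  calc ‖x k‖ ≤ W (x k) := norm_le_decayValue (hne _)
    _ ≤ γ' ^ k * W (x 0) := le_geom (u := fun j => W (x j)) hγ'0 k fun j _ => hstep j
    _ ≤ γ' ^ k * (M * ‖x 0‖) :=
        mul_le_mul_of_nonneg_left (decayValue_le (hbound _)) (pow_nonneg hγ'0 k)
    _ = M * γ' ^ k * ‖x 0‖ := by ring

/-- If the system is current-mode-independent memory-feedback
stabilizable, then it is stabilizable by a static feedback that is homogeneous of
degree one. -/
theorem ifs_mem_implies_homogeneous_static {n m : ℕ} (hn : 0 < n) (hm : 0 < m) {S : Type*} [Fintype S] [Nonempty S]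
    (A : S → Matrix (Fin n) (Fin n) ℝ) (B : S → Matrix (Fin n) (Fin m) ℝ)
    (h : ∃ M > (0 : ℝ), ∃ γ ∈ Set.Ico (0 : ℝ) 1,
      ∃ Ψ : List (EuclideanSpace ℝ (Fin n)) → List S → EuclideanSpace ℝ (Fin m),
        ∀ (x0 : EuclideanSpace ℝ (Fin n)) (σ : ℕ → S) (k : ℕ),
          ‖memTraj A B Ψ x0 σ k‖ ≤ M * γ ^ k * ‖x0‖) :
    ∃ Φ : EuclideanSpace ℝ (Fin n) → EuclideanSpace ℝ (Fin m),
      (∀ (lam : ℝ) (x : EuclideanSpace ℝ (Fin n)), Φ (lam • x) = lam • Φ x) ∧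
      ∃ M > (0 : ℝ), ∃ γ' ∈ Set.Ico (0 : ℝ) 1,
        ∀ (x : ℕ → EuclideanSpace ℝ (Fin n)) (σ : ℕ → S),
          (∀ k, x (k + 1) = (A (σ k)).mulVec (x k) + (B (σ k)).mulVec (Φ (x k))) →
          ∀ k, ‖x k‖ ≤ M * γ' ^ k * ‖x 0‖ :=
  ifs_mem_implies_homogeneous_static_general A B h
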